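/- arXiv:1607.07270 — 2 statements merged into one kernel-verified Lean document; each statement's English description precedes it below -/
import Mathlib

section
/- Let H and G be real Hilbert spaces, φ : 𝒳 → H and ψ : 𝒴 → G feature maps with kernels k_φ(x,x') := ⟪φ(x),φ(x')⟫ and k_ψ(y,y') := ⟪ψ(y),ψ(y')⟫. Fix points (x_1,y_1),…,(x_m,y_m) ∈ 𝒳 × 𝒴. Then the joint Rademacher average satisfies R̂_m(X,Y) := E_σ[ sup_{‖f‖≤1, ‖g‖≤1} |(1/m) Σ_{i=1}^m σ_i ⟪f,φ(x_i)⟫ ⟪g,ψ(y_i)⟫| ] ≤ (1/m) (Σ_{i=1}^m k_φ(x_i,x_i) k_ψ(y_i,y_i))^{1/2}, where σ is uniformly distributed over {−1,+1}^m. -/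
open Finset

/-- The joint Rademacher average of the sample `(x 1, y 1), …, (x m, y m)` with respect
to the feature maps `φ` and `ψ`: the average over all `2^m` sign vectors `σ` of
`sup_{‖f‖≤1, ‖g‖≤1} |(1/m) ∑ i, σ i * ⟪f, φ (x i)⟫ * ⟪g, ψ (y i)⟫|`. -/
noncomputable def jointRademacher {𝒳 𝒴 H G : Type*}
    [NormedAddCommGroup H] [InnerProductSpace ℝ H]
    [NormedAddCommGroup G] [InnerProductSpace ℝ G]
    (φ : 𝒳 → H) (ψ : 𝒴 → G) {m : ℕ} (x : Fin m → 𝒳) (y : Fin m → 𝒴) : ℝ :=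
  (2 ^ m : ℝ)⁻¹ * ∑ ε : Fin m → Bool,
    ⨆ fg : {f : H // ‖f‖ ≤ 1} × {g : G // ‖g‖ ≤ 1},
      |(1 / m : ℝ) * ∑ i, (if ε i then (1 : ℝ) else -1) *
        ((inner ℝ fg.1.1 (φ (x i)) : ℝ) * (inner ℝ fg.2.1 (ψ (y i)) : ℝ))|

lemma sum_sign_mul_sign {m : ℕ} {i j : Fin m} (h : i ≠ j) :
    ∑ ε : Fin m → Bool, ((if ε i then (1:ℝ) else -1) * (if ε j then (1:ℝ) else -1)) = 0 := by
  classical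
  set F : (Fin m → Bool) → ℝ :=
    fun ε => (if ε i then (1:ℝ) else -1) * (if ε j then (1:ℝ) else -1) with hF
  have hinv : Function.Involutive (fun ε : Fin m → Bool => Function.update ε i (!(ε i))) := by
    intro ε; funext k
    by_cases hk : k = i
    · subst hk; simp
    · simp [Function.update, hk]
  have hsum : ∑ ε : Fin m → Bool, F ε = ∑ ε : Fin m → Bool, -F ε := by
    refine Fintype.sum_bijective _ hinv.bijective F (fun ε => -F ε) ?_
    intro ε
    have h1 : (Function.update ε i (!(ε i))) i = !(ε i) := Function.update_self _ _ _
    have h2 : (Function.update ε i (!(ε i))) j = ε j :=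
      Function.update_of_ne (Ne.symm h) _ _
    simp only [hF, h1, h2]
    cases ε i <;> cases ε j <;> norm_num
  have : ∑ ε : Fin m → Bool, F ε = 0 := by
    have := hsum
    rw [Finset.sum_neg_distrib] at this
    linarith
  exact this

lemma sum_sign_mul_sign' {m : ℕ} (i j : Fin m) :
    ∑ ε : Fin m → Bool, ((if ε i then (1:ℝ) else -1) * (if ε j then (1:ℝ) else -1))
      = if i = j then (2:ℝ)^m else 0 := by
  by_cases h : i = j
  · subst h
    simp only [if_pos rfl]
    have : ∀ ε : Fin m → Bool, ((if ε i then (1:ℝ) else -1) * (if ε i then (1:ℝ) else -1)) = 1 := by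
      intro ε; cases ε i <;> norm_num
    simp [this, Finset.sum_const, Finset.card_univ]
  · rw [if_neg h]; exact sum_sign_mul_sign h

section Aux
variable {W : Type*} [NormedAddCommGroup W] [InnerProductSpace ℝ W]

lemma sum_norm_sq_rad {m : ℕ} (v : Fin m → W) :
    ∑ ε : Fin m → Bool, ‖∑ i, (if ε i then (1:ℝ) else -1) • v i‖ ^ 2
      = 2 ^ m * ∑ i, ‖v i‖ ^ 2 := by
  have h1 : ∀ ε : Fin m → Bool, ‖∑ i, (if ε i then (1:ℝ) else -1) • v i‖ ^ 2
      = ∑ i, ∑ j, ((if ε i then (1:ℝ) else -1) * (if ε j then (1:ℝ) else -1))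
          * (inner ℝ (v i) (v j) : ℝ) := by
    intro ε
    rw [← real_inner_self_eq_norm_sq, sum_inner]
    refine Finset.sum_congr rfl fun i _ => ?_
    rw [inner_sum]
    refine Finset.sum_congr rfl fun j _ => ?_
    rw [real_inner_smul_left, real_inner_smul_right]; ring
  calc ∑ ε : Fin m → Bool, ‖∑ i, (if ε i then (1:ℝ) else -1) • v i‖ ^ 2
      = ∑ i, ∑ j, (∑ ε : Fin m → Bool,
          ((if ε i then (1:ℝ) else -1) * (if ε j then (1:ℝ) else -1))) * (inner ℝ (v i) (v j) : ℝ) := by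
        simp_rw [h1]
        rw [Finset.sum_comm]
        refine Finset.sum_congr rfl fun i _ => ?_
        rw [Finset.sum_comm]
        refine Finset.sum_congr rfl fun j _ => ?_
        rw [Finset.sum_mul]
    _ = 2 ^ m * ∑ i, ‖v i‖ ^ 2 := by
        simp_rw [sum_sign_mul_sign', ite_mul, zero_mul]
        rw [Finset.mul_sum]
        refine Finset.sum_congr rfl fun i _ => ?_
        rw [Finset.sum_ite_eq]
        simp [real_inner_self_eq_norm_sq]

end Aux

/-- The joint Rademacher average of a sample is bounded by
`(1/m) * (∑ i, k_φ(x i, x i) * k_ψ(y i, y i))^{1/2}`. -/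
theorem jointRademacher_le_sqrt_sum_diag
    {𝒳 𝒴 H G : Type*}
    [NormedAddCommGroup H] [InnerProductSpace ℝ H]
    [NormedAddCommGroup G] [InnerProductSpace ℝ G]
    (φ : 𝒳 → H) (ψ : 𝒴 → G) (m : ℕ) (x : Fin m → 𝒳) (y : Fin m → 𝒴) :
    jointRademacher φ ψ x y
      ≤ (1 / m : ℝ) *
        Real.sqrt (∑ i, (inner ℝ (φ (x i)) (φ (x i)) : ℝ) * (inner ℝ (ψ (y i)) (ψ (y i)) : ℝ)) := by
  classical
  set K : Submodule ℝ G := Submodule.span ℝ (Set.range fun i => ψ (y i)) with hK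
  haveI : FiniteDimensional ℝ K := FiniteDimensional.span_of_finite ℝ (Set.finite_range _)
  set d := Module.finrank ℝ K with hd
  let b : OrthonormalBasis (Fin d) ℝ K := stdOrthonormalBasis ℝ K
  let e : Fin d → G := fun k => (b k : G)
  have he : Orthonormal ℝ e := (b.orthonormal).comp_linearIsometry K.subtypeₗᵢ
  -- expansion lemma
  have hexp : ∀ (g : G) (i : Fin m),
      ∑ k, (inner ℝ (e k) g : ℝ) * (inner ℝ (e k) (ψ (y i)) : ℝ) = (inner ℝ g (ψ (y i)) : ℝ) := by
    intro g i
    have hz : ψ (y i) ∈ K := Submodule.subset_span ⟨i, rfl⟩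
    set z : K := ⟨ψ (y i), hz⟩ with hzdef
    have hrep : (∑ k, (inner ℝ (b k) z : ℝ) • (b k : G)) = ψ (y i) := by
      have := b.sum_repr' z
      calc (∑ k, (inner ℝ (b k) z : ℝ) • (b k : G)) = ((∑ k, (inner ℝ (b k) z : ℝ) • b k : K) : G) := by
            push_cast [Submodule.coe_sum]
            rfl
        _ = ψ (y i) := by rw [this]
    have hco : ∀ k, (inner ℝ (b k) z : ℝ) = (inner ℝ (e k) (ψ (y i)) : ℝ) := by
      intro k; rfl
    conv_rhs => rw [← hrep]
    rw [inner_sum]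
    refine Finset.sum_congr rfl fun k _ => ?_
    rw [real_inner_smul_right, hco, real_inner_comm g (e k)]
    ring
  let W := PiLp 2 (fun _ : Fin d => H)
  let v : Fin m → W := fun i => WithLp.toLp 2 (fun k => (inner ℝ (e k) (ψ (y i)) : ℝ) • φ (x i))
  -- norm of v i
  have hvnorm : ∀ i, ‖v i‖ ^ 2
      = (inner ℝ (φ (x i)) (φ (x i)) : ℝ) * (inner ℝ (ψ (y i)) (ψ (y i)) : ℝ) := by
    intro i
    rw [PiLp.norm_sq_eq_of_L2]
    have : ∀ k, ‖(inner ℝ (e k) (ψ (y i)) : ℝ) • φ (x i)‖ ^ 2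
        = ((inner ℝ (e k) (ψ (y i)) : ℝ) * (inner ℝ (e k) (ψ (y i)) : ℝ)) * ‖φ (x i)‖^2 := by
      intro k
      rw [norm_smul]
      rw [mul_pow, Real.norm_eq_abs, sq_abs]
      ring
    simp_rw [v, this]
    rw [← Finset.sum_mul, hexp (ψ (y i)) i]
    simp only [real_inner_self_eq_norm_sq]
    ring
  -- bound on each sup
  have hsup : ∀ ε : Fin m → Bool,
      (⨆ fg : {f : H // ‖f‖ ≤ 1} × {g : G // ‖g‖ ≤ 1},
        |(1 / m : ℝ) * ∑ i, (if ε i then (1 : ℝ) else -1) *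
          ((inner ℝ fg.1.1 (φ (x i)) : ℝ) * (inner ℝ fg.2.1 (ψ (y i)) : ℝ))|)
      ≤ (1 / m : ℝ) * ‖∑ i, (if ε i then (1:ℝ) else -1) • v i‖ := by
    intro ε
    haveI : Nonempty ({f : H // ‖f‖ ≤ 1} × {g : G // ‖g‖ ≤ 1}) :=
      ⟨⟨⟨0, by simp⟩, ⟨0, by simp⟩⟩⟩
    refine ciSup_le fun fg => ?_
    obtain ⟨⟨f, hf⟩, ⟨g, hg⟩⟩ := fg
    set w : W := WithLp.toLp 2 (fun k => (inner ℝ (e k) g : ℝ) • f) with hw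
    have hwnorm : ‖w‖ ≤ 1 := by
      have h1 : ‖w‖^2 ≤ 1 := by
        rw [PiLp.norm_sq_eq_of_L2]
        have h2 : ∀ k, ‖(inner ℝ (e k) g : ℝ) • f‖ ^ 2 ≤ ‖(inner ℝ (e k) g : ℝ)‖^2 := by
          intro k
          rw [norm_smul, mul_pow]
          have hf2 : ‖f‖^2 ≤ 1 := by nlinarith [norm_nonneg f]
          calc ‖(inner ℝ (e k) g : ℝ)‖^2 * ‖f‖^2 ≤ ‖(inner ℝ (e k) g : ℝ)‖^2 * 1 :=
              mul_le_mul_of_nonneg_left hf2 (sq_nonneg _)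
            _ = _ := mul_one _
        calc ∑ k, ‖w k‖^2 ≤ ∑ k, ‖(inner ℝ (e k) g : ℝ)‖^2 := Finset.sum_le_sum fun k _ => h2 k
          _ ≤ ‖g‖^2 := by
              have := he.sum_inner_products_le (s := Finset.univ) g
              simpa using this
          _ ≤ 1 := by nlinarith [norm_nonneg g]
      nlinarith [norm_nonneg w, h1]
    have hip : ∑ i, (if ε i then (1:ℝ) else -1) *
        ((inner ℝ f (φ (x i)) : ℝ) * (inner ℝ g (ψ (y i)) : ℝ))
        = (inner ℝ w (∑ i, (if ε i then (1:ℝ) else -1) • v i) : ℝ) := by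
      rw [inner_sum]
      refine Finset.sum_congr rfl fun i _ => ?_
      rw [real_inner_smul_right]
      have : (inner ℝ w (v i) : ℝ) = (inner ℝ f (φ (x i)) : ℝ) * (inner ℝ g (ψ (y i)) : ℝ) := by
        rw [PiLp.inner_apply]
        have : ∀ k, (inner ℝ (w k) (v i k) : ℝ)
            = ((inner ℝ (e k) g : ℝ) * (inner ℝ (e k) (ψ (y i)) : ℝ)) * (inner ℝ f (φ (x i)) : ℝ) := by
          intro k
          show (inner ℝ ((inner ℝ (e k) g : ℝ) • f) ((inner ℝ (e k) (ψ (y i)) : ℝ) • φ (x i)) : ℝ) = _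
          rw [real_inner_smul_left, real_inner_smul_right]; ring
        simp_rw [this]
        rw [← Finset.sum_mul, hexp g i]; ring
      rw [this]
    rw [abs_mul, hip]
    have habs : |(1/m : ℝ)| = (1/m : ℝ) := abs_of_nonneg (by positivity)
    rw [habs]
    refine mul_le_mul_of_nonneg_left ?_ (by positivity)
    calc |(inner ℝ w (∑ i, (if ε i then (1:ℝ) else -1) • v i) : ℝ)|
        ≤ ‖w‖ * ‖∑ i, (if ε i then (1:ℝ) else -1) • v i‖ := abs_real_inner_le_norm _ _
      _ ≤ 1 * ‖∑ i, (if ε i then (1:ℝ) else -1) • v i‖ :=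
          mul_le_mul_of_nonneg_right hwnorm (norm_nonneg _)
      _ = ‖∑ i, (if ε i then (1:ℝ) else -1) • v i‖ := one_mul _
  -- average of norms
  set T : ℝ := ∑ i, (inner ℝ (φ (x i)) (φ (x i)) : ℝ) * (inner ℝ (ψ (y i)) (ψ (y i)) : ℝ) with hT
  have hT0 : 0 ≤ T := by
    rw [hT]
    refine Finset.sum_nonneg fun i _ => mul_nonneg real_inner_self_nonneg real_inner_self_nonneg
  have havg : (2 ^ m : ℝ)⁻¹ * ∑ ε : Fin m → Bool, ‖∑ i, (if ε i then (1:ℝ) else -1) • v i‖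
      ≤ Real.sqrt T := by
    set A : ℝ := ∑ ε : Fin m → Bool, ‖∑ i, (if ε i then (1:ℝ) else -1) • v i‖ with hA
    have hA0 : 0 ≤ A := Finset.sum_nonneg fun _ _ => norm_nonneg _
    have hsq : A ^ 2 ≤ (2:ℝ)^m * ∑ ε : Fin m → Bool, ‖∑ i, (if ε i then (1:ℝ) else -1) • v i‖^2 := by
      have h := sq_sum_le_card_mul_sum_sq (s := (Finset.univ : Finset (Fin m → Bool)))
        (f := fun ε => ‖∑ i, (if ε i then (1:ℝ) else -1) • v i‖)
      have hc : (((Finset.univ : Finset (Fin m → Bool)).card : ℕ) : ℝ) = 2 ^ m := by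
        rw [Finset.card_univ, Fintype.card_fun]
        simp
      rw [hc] at h
      exact h
    have hsum2 : ∑ ε : Fin m → Bool, ‖∑ i, (if ε i then (1:ℝ) else -1) • v i‖^2
        = 2 ^ m * T := by
      rw [sum_norm_sq_rad v]
      congr 1
      exact Finset.sum_congr rfl fun i _ => hvnorm i
    have h2m : (0:ℝ) < 2 ^ m := by positivity
    rw [hsum2] at hsq
    have hle : ((2 ^ m : ℝ)⁻¹ * A)^2 ≤ T := by
      rw [mul_pow]
      calc ((2 ^ m : ℝ)⁻¹)^2 * A^2 ≤ ((2 ^ m : ℝ)⁻¹)^2 * ((2:ℝ)^m * ((2:ℝ)^m * T)) := by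
            refine mul_le_mul_of_nonneg_left ?_ (by positivity)
            exact hsq
        _ = T := by field_simp
    calc (2 ^ m : ℝ)⁻¹ * A = Real.sqrt (((2 ^ m : ℝ)⁻¹ * A)^2) := by
          rw [Real.sqrt_sq (by positivity)]
      _ ≤ Real.sqrt T := Real.sqrt_le_sqrt hle
  -- put it together
  rw [jointRademacher]
  calc (2 ^ m : ℝ)⁻¹ * ∑ ε : Fin m → Bool,
        ⨆ fg : {f : H // ‖f‖ ≤ 1} × {g : G // ‖g‖ ≤ 1},
          |(1 / m : ℝ) * ∑ i, (if ε i then (1 : ℝ) else -1) *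
            ((inner ℝ fg.1.1 (φ (x i)) : ℝ) * (inner ℝ fg.2.1 (ψ (y i)) : ℝ))|
      ≤ (2 ^ m : ℝ)⁻¹ * ∑ ε : Fin m → Bool,
          (1 / m : ℝ) * ‖∑ i, (if ε i then (1:ℝ) else -1) • v i‖ := by
        refine mul_le_mul_of_nonneg_left (Finset.sum_le_sum fun ε _ => hsup ε) (by positivity)
    _ = (1 / m : ℝ) * ((2 ^ m : ℝ)⁻¹ * ∑ ε : Fin m → Bool, ‖∑ i, (if ε i then (1:ℝ) else -1) • v i‖) := by
        rw [← Finset.mul_sum]; ring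
    _ ≤ (1 / m : ℝ) * Real.sqrt T := mul_le_mul_of_nonneg_left havg (by positivity)
end

section
/- Let H and G be real Hilbert spaces, φ : 𝒳 → H and ψ : 𝒴 → G feature maps whose kernels are bounded by K > 0 (i.e. 0 ≤ ⟪φ(x),φ(x')⟫ ≤ K and 0 ≤ ⟪ψ(y),ψ(y')⟫ ≤ K for all arguments). View JDD_b as a function of the 2m sample points (x_1,y_1),…,(x_m,y_m) and (x'_1,y'_1),…,(x'_m,y'_m). Then JDD_b has the bounded differences property with constant 2K/m: replacing any single one of the 2m pairs (x_i,y_i) or (x'_i,y'_i) by another point of 𝒳 × 𝒴 (or replacing any single coordinate x_i, y_i, x'_i or y'_i) changes the value of JDD_b by at most 2K/m in absolute value. -/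
open Finset

lemma abs_ciSup_sub_ciSup_le' {ι : Type*} [Nonempty ι] {F G' : ι → ℝ} {c : ℝ}
    (hF : BddAbove (Set.range F)) (hG : BddAbove (Set.range G'))
    (h : ∀ i, |F i - G' i| ≤ c) : |(⨆ i, F i) - ⨆ i, G' i| ≤ c := by
  rw [abs_sub_le_iff]
  constructor
  · rw [sub_le_iff_le_add]
    refine ciSup_le fun i => ?_
    have h1 := (abs_le.1 (h i)).2
    have h2 : F i ≤ G' i + c := by linarith
    calc F i ≤ G' i + c := h2
      _ ≤ (⨆ i, G' i) + c := add_le_add_left (le_ciSup hG i) c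
      _ = c + ⨆ i, G' i := add_comm _ _
  · rw [sub_le_iff_le_add]
    refine ciSup_le fun i => ?_
    have h1 := (abs_le.1 (h i)).1
    have h2 : G' i ≤ F i + c := by linarith
    calc G' i ≤ F i + c := h2
      _ ≤ (⨆ i, F i) + c := add_le_add_left (le_ciSup hF i) c
      _ = c + ⨆ i, F i := add_comm _ _

/-- The (biased) empirical joint distribution discrepancy of the samples
`(x i, y i)` and `(x' i, y' i)`, `i = 1, …, m`:
`sup_{‖f‖≤1, ‖g‖≤1} ((1/m) ∑ i, ⟪f, φ (x i)⟫⟪g, ψ (y i)⟫ − (1/m) ∑ i, ⟪f, φ (x' i)⟫⟪g, ψ (y' i)⟫)`. -/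
noncomputable def JDDb {𝒳 𝒴 H G : Type*}
    [NormedAddCommGroup H] [InnerProductSpace ℝ H]
    [NormedAddCommGroup G] [InnerProductSpace ℝ G]
    (φ : 𝒳 → H) (ψ : 𝒴 → G) {m : ℕ}
    (x : Fin m → 𝒳) (y : Fin m → 𝒴) (x' : Fin m → 𝒳) (y' : Fin m → 𝒴) : ℝ :=
  ⨆ fg : {f : H // ‖f‖ ≤ 1} × {g : G // ‖g‖ ≤ 1},
    ((1 / m : ℝ) * ∑ i, (inner ℝ fg.1.1 (φ (x i)) : ℝ) * (inner ℝ fg.2.1 (ψ (y i)) : ℝ)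
      - (1 / m : ℝ) * ∑ i, (inner ℝ fg.1.1 (φ (x' i)) : ℝ) * (inner ℝ fg.2.1 (ψ (y' i)) : ℝ))

/-- If both kernels take values in `[0, K]` with `K > 0`, then the empirical
joint distribution discrepancy, viewed as a function of the `2m` sample pairs, has the
bounded differences property with constant `2K/m`: replacing any single pair
`(x i, y i)` (resp. `(x' i, y' i)`) by an arbitrary point `(a, b) ∈ 𝒳 × 𝒴` changes the
value of `JDD_b` by at most `2K/m` in absolute value. -/
theorem jddB_bounded_differences
    {𝒳 𝒴 H G : Type*}
    [NormedAddCommGroup H] [InnerProductSpace ℝ H]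
    [NormedAddCommGroup G] [InnerProductSpace ℝ G]
    (φ : 𝒳 → H) (ψ : 𝒴 → G) (K : ℝ) (hK : 0 < K)
    (hφ : ∀ x x' : 𝒳, (inner ℝ (φ x) (φ x') : ℝ) ∈ Set.Icc 0 K)
    (hψ : ∀ y y' : 𝒴, (inner ℝ (ψ y) (ψ y') : ℝ) ∈ Set.Icc 0 K)
    (m : ℕ) (hm : 0 < m)
    (x : Fin m → 𝒳) (y : Fin m → 𝒴) (x' : Fin m → 𝒳) (y' : Fin m → 𝒴)
    (i : Fin m) (a : 𝒳) (b : 𝒴) :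
    |JDDb φ ψ (Function.update x i a) (Function.update y i b) x' y'
        - JDDb φ ψ x y x' y'| ≤ 2 * K / m ∧
    |JDDb φ ψ x y (Function.update x' i a) (Function.update y' i b)
        - JDDb φ ψ x y x' y'| ≤ 2 * K / m := by
  have hmR : (0:ℝ) < m := by exact_mod_cast hm
  -- per-point product bound
  have hterm : ∀ (f : H) (g : G), ‖f‖ ≤ 1 → ‖g‖ ≤ 1 → ∀ (xx : 𝒳) (yy : 𝒴),
      |(inner ℝ f (φ xx) : ℝ) * (inner ℝ g (ψ yy) : ℝ)| ≤ K := by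
    intro f g hf hg xx yy
    have hφn : ‖φ xx‖ ≤ Real.sqrt K := by
      rw [Real.le_sqrt (norm_nonneg _)]
      have h2 := (hφ xx xx).2
      rw [real_inner_self_eq_norm_mul_norm] at h2
      · nlinarith [norm_nonneg (φ xx)]
      · exact hK.le
    have hψn : ‖ψ yy‖ ≤ Real.sqrt K := by
      rw [Real.le_sqrt (norm_nonneg _)]
      have h2 := (hψ yy yy).2
      rw [real_inner_self_eq_norm_mul_norm] at h2
      · nlinarith [norm_nonneg (ψ yy)]
      · exact hK.le
    have h1 : |(inner ℝ f (φ xx) : ℝ)| ≤ Real.sqrt K := by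
      calc |(inner ℝ f (φ xx) : ℝ)| ≤ ‖f‖ * ‖φ xx‖ := abs_real_inner_le_norm f (φ xx)
        _ ≤ 1 * Real.sqrt K := by
            apply mul_le_mul hf hφn (norm_nonneg _) zero_le_one
        _ = Real.sqrt K := one_mul _
    have h2 : |(inner ℝ g (ψ yy) : ℝ)| ≤ Real.sqrt K := by
      calc |(inner ℝ g (ψ yy) : ℝ)| ≤ ‖g‖ * ‖ψ yy‖ := abs_real_inner_le_norm g (ψ yy)
        _ ≤ 1 * Real.sqrt K := by
            apply mul_le_mul hg hψn (norm_nonneg _) zero_le_one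
        _ = Real.sqrt K := one_mul _
    calc |(inner ℝ f (φ xx) : ℝ) * (inner ℝ g (ψ yy) : ℝ)|
        = |(inner ℝ f (φ xx) : ℝ)| * |(inner ℝ g (ψ yy) : ℝ)| := abs_mul _ _
      _ ≤ Real.sqrt K * Real.sqrt K := by
          apply mul_le_mul h1 h2 (abs_nonneg _) (Real.sqrt_nonneg _)
      _ = K := Real.mul_self_sqrt hK.le
  -- sum bound
  have hsum : ∀ (X : Fin m → 𝒳) (Y : Fin m → 𝒴) (f : H) (g : G), ‖f‖ ≤ 1 → ‖g‖ ≤ 1 →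
      |(1 / m : ℝ) * ∑ j, (inner ℝ f (φ (X j)) : ℝ) * (inner ℝ g (ψ (Y j)) : ℝ)| ≤ K := by
    intro X Y f g hf hg
    rw [abs_mul]
    have h1 : |(∑ j, (inner ℝ f (φ (X j)) : ℝ) * (inner ℝ g (ψ (Y j)) : ℝ))| ≤ m * K := by
      calc |(∑ j, (inner ℝ f (φ (X j)) : ℝ) * (inner ℝ g (ψ (Y j)) : ℝ))|
          ≤ ∑ j, |(inner ℝ f (φ (X j)) : ℝ) * (inner ℝ g (ψ (Y j)) : ℝ)| :=
            Finset.abs_sum_le_sum_abs _ _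
        _ ≤ ∑ _j : Fin m, K := Finset.sum_le_sum fun j _ => hterm f g hf hg _ _
        _ = m * K := by simp [mul_comm]
    calc |(1 / m : ℝ)| * |(∑ j, (inner ℝ f (φ (X j)) : ℝ) * (inner ℝ g (ψ (Y j)) : ℝ))|
        ≤ (1 / m : ℝ) * (m * K) := by
          rw [abs_of_pos (by positivity : (0:ℝ) < 1 / m)]
          exact mul_le_mul_of_nonneg_left h1 (by positivity)
      _ = K := by field_simp
  -- boundedness of range
  have hbdd : ∀ (X : Fin m → 𝒳) (Y : Fin m → 𝒴) (X' : Fin m → 𝒳) (Y' : Fin m → 𝒴),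
      BddAbove (Set.range fun fg : {f : H // ‖f‖ ≤ 1} × {g : G // ‖g‖ ≤ 1} =>
        ((1 / m : ℝ) * ∑ j, (inner ℝ fg.1.1 (φ (X j)) : ℝ) * (inner ℝ fg.2.1 (ψ (Y j)) : ℝ)
          - (1 / m : ℝ) * ∑ j, (inner ℝ fg.1.1 (φ (X' j)) : ℝ) * (inner ℝ fg.2.1 (ψ (Y' j)) : ℝ))) := by
    intro X Y X' Y'
    refine ⟨2 * K, ?_⟩
    rintro v ⟨fg, rfl⟩
    have b1 := hsum X Y fg.1.1 fg.2.1 fg.1.2 fg.2.2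
    have b2 := hsum X' Y' fg.1.1 fg.2.1 fg.1.2 fg.2.2
    have := abs_le.1 b1
    have := abs_le.1 b2
    simp only
    linarith [(abs_le.1 b1).1, (abs_le.1 b1).2, (abs_le.1 b2).1, (abs_le.1 b2).2]
  -- difference of sums under update
  have hdiff : ∀ (X : Fin m → 𝒳) (Y : Fin m → 𝒴) (f : H) (g : G), ‖f‖ ≤ 1 → ‖g‖ ≤ 1 →
      |(1 / m : ℝ) * ∑ j, (inner ℝ f (φ (Function.update X i a j)) : ℝ)
          * (inner ℝ g (ψ (Function.update Y i b j)) : ℝ)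
        - (1 / m : ℝ) * ∑ j, (inner ℝ f (φ (X j)) : ℝ) * (inner ℝ g (ψ (Y j)) : ℝ)| ≤ 2 * K / m := by
    intro X Y f g hf hg
    rw [← mul_sub, ← Finset.sum_sub_distrib]
    have hs : ∑ j, ((inner ℝ f (φ (Function.update X i a j)) : ℝ)
          * (inner ℝ g (ψ (Function.update Y i b j)) : ℝ)
        - (inner ℝ f (φ (X j)) : ℝ) * (inner ℝ g (ψ (Y j)) : ℝ))
        = (inner ℝ f (φ a) : ℝ) * (inner ℝ g (ψ b) : ℝ)
          - (inner ℝ f (φ (X i)) : ℝ) * (inner ℝ g (ψ (Y i)) : ℝ) := by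
      rw [Finset.sum_eq_single i]
      · simp
      · intro j _ hj
        simp [Function.update_of_ne hj]
      · simp
    rw [hs, abs_mul]
    have hb : |(inner ℝ f (φ a) : ℝ) * (inner ℝ g (ψ b) : ℝ)
        - (inner ℝ f (φ (X i)) : ℝ) * (inner ℝ g (ψ (Y i)) : ℝ)| ≤ 2 * K := by
      have t1 := hterm f g hf hg a b
      have t2 := hterm f g hf hg (X i) (Y i)
      calc _ ≤ |(inner ℝ f (φ a) : ℝ) * (inner ℝ g (ψ b) : ℝ)|
            + |(inner ℝ f (φ (X i)) : ℝ) * (inner ℝ g (ψ (Y i)) : ℝ)| := abs_sub _ _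
        _ ≤ 2 * K := by linarith
    calc |(1 / m : ℝ)| * _ ≤ (1 / m : ℝ) * (2 * K) := by
          rw [abs_of_pos (by positivity : (0:ℝ) < 1 / m)]
          exact mul_le_mul_of_nonneg_left hb (by positivity)
      _ = 2 * K / m := by ring
  haveI : Nonempty ({f : H // ‖f‖ ≤ 1} × {g : G // ‖g‖ ≤ 1}) :=
    ⟨⟨⟨0, by simp⟩, ⟨0, by simp⟩⟩⟩
  constructor
  · rw [JDDb, JDDb]
    apply abs_ciSup_sub_ciSup_le' (hbdd _ _ _ _) (hbdd _ _ _ _)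
    intro fg
    have : ((1 / m : ℝ) * ∑ j, (inner ℝ fg.1.1 (φ (Function.update x i a j)) : ℝ)
          * (inner ℝ fg.2.1 (ψ (Function.update y i b j)) : ℝ)
        - (1 / m : ℝ) * ∑ j, (inner ℝ fg.1.1 (φ (x' j)) : ℝ) * (inner ℝ fg.2.1 (ψ (y' j)) : ℝ))
      - ((1 / m : ℝ) * ∑ j, (inner ℝ fg.1.1 (φ (x j)) : ℝ) * (inner ℝ fg.2.1 (ψ (y j)) : ℝ)
        - (1 / m : ℝ) * ∑ j, (inner ℝ fg.1.1 (φ (x' j)) : ℝ) * (inner ℝ fg.2.1 (ψ (y' j)) : ℝ))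
      = (1 / m : ℝ) * ∑ j, (inner ℝ fg.1.1 (φ (Function.update x i a j)) : ℝ)
          * (inner ℝ fg.2.1 (ψ (Function.update y i b j)) : ℝ)
        - (1 / m : ℝ) * ∑ j, (inner ℝ fg.1.1 (φ (x j)) : ℝ) * (inner ℝ fg.2.1 (ψ (y j)) : ℝ) := by
      ring
    rw [this]
    exact hdiff x y fg.1.1 fg.2.1 fg.1.2 fg.2.2
  · rw [JDDb, JDDb]
    apply abs_ciSup_sub_ciSup_le' (hbdd _ _ _ _) (hbdd _ _ _ _)
    intro fg
    have : ((1 / m : ℝ) * ∑ j, (inner ℝ fg.1.1 (φ (x j)) : ℝ) * (inner ℝ fg.2.1 (ψ (y j)) : ℝ)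
        - (1 / m : ℝ) * ∑ j, (inner ℝ fg.1.1 (φ (Function.update x' i a j)) : ℝ)
          * (inner ℝ fg.2.1 (ψ (Function.update y' i b j)) : ℝ))
      - ((1 / m : ℝ) * ∑ j, (inner ℝ fg.1.1 (φ (x j)) : ℝ) * (inner ℝ fg.2.1 (ψ (y j)) : ℝ)
        - (1 / m : ℝ) * ∑ j, (inner ℝ fg.1.1 (φ (x' j)) : ℝ) * (inner ℝ fg.2.1 (ψ (y' j)) : ℝ))
      = -((1 / m : ℝ) * ∑ j, (inner ℝ fg.1.1 (φ (Function.update x' i a j)) : ℝ)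
          * (inner ℝ fg.2.1 (ψ (Function.update y' i b j)) : ℝ)
        - (1 / m : ℝ) * ∑ j, (inner ℝ fg.1.1 (φ (x' j)) : ℝ) * (inner ℝ fg.2.1 (ψ (y' j)) : ℝ)) := by
      ring
    rw [this, abs_neg]
    exact hdiff x' y' fg.1.1 fg.2.1 fg.1.2 fg.2.2
end
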